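/- Let L be an N×N real symmetric matrix, let s be a nonzero vector in ℝ^N, and let V_M be an N×M real matrix with orthonormal columns whose columns span the Krylov subspace K_M(L,s) = span{s, Ls, …, L^{M−1}s} and whose first column is s/‖s‖₂, and set H_M = V_Mᵀ L V_M. Let g be a function defined on the union of the spectra of L and H_M. Then ‖g(L)s − ‖s‖₂ · V_M g(H_M) e₁‖₂ ≤ 2‖s‖₂ · min over all polynomials p of degree at most M−1 of max over z in spec(L) ∪ spec(H_M) of |g(z) − p(z)|. -/

import Mathlib

open Matrix Polynomial

/-!
Because `V Vᵀ` fixes the Krylov space, induction on `k` gives `Lᵏ s = ‖s‖ V Hᵏ e₁` for `k < M`,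
where `H = Vᵀ L V`: the Lanczos approximation is exact on polynomials of degree `< M`. Subtracting
`p(L) s = ‖s‖ V p(H) e₁` from both terms of the error leaves
`(g - p)(L) s - ‖s‖ V (g - p)(H) e₁`, and since `U`, `V`, `W` are isometries each of these two
vectors has norm at most `‖s‖ · max |g - p|` over the corresponding spectrum.
-/

noncomputable def euclNorm {n : ℕ} (x : Fin n → ℝ) : ℝ := Real.sqrt (∑ i, x i ^ 2)

section EuclNorm
variable {n m : ℕ}

theorem euclNorm_eq_norm (x : Fin n → ℝ) : euclNorm x = ‖WithLp.toLp 2 x‖ := by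
  simp [EuclideanSpace.norm_eq, euclNorm]

theorem euclNorm_eq_sqrt_dotProduct (x : Fin n → ℝ) : euclNorm x = Real.sqrt (x ⬝ᵥ x) := by
  simp [euclNorm, dotProduct, sq]

theorem euclNorm_nonneg (x : Fin n → ℝ) : 0 ≤ euclNorm x := Real.sqrt_nonneg _

theorem euclNorm_eq_zero {x : Fin n → ℝ} : euclNorm x = 0 ↔ x = 0 := by
  rw [euclNorm_eq_norm, norm_eq_zero, WithLp.toLp_eq_zero]

theorem euclNorm_sub_le (x y : Fin n → ℝ) : euclNorm (x - y) ≤ euclNorm x + euclNorm y := by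
  simpa only [euclNorm_eq_norm, WithLp.toLp_sub] using norm_sub_le _ _

theorem euclNorm_single (i : Fin n) (a : ℝ) : euclNorm (Pi.single i a) = |a| := by
  simp [euclNorm, Pi.single_apply, Real.sqrt_sq_eq_abs]

theorem euclNorm_mulVec_of_transpose_mul_self {A : Matrix (Fin n) (Fin m) ℝ} (hA : Aᵀ * A = 1)
    (x : Fin m → ℝ) : euclNorm (A *ᵥ x) = euclNorm x := by
  rw [euclNorm_eq_sqrt_dotProduct, euclNorm_eq_sqrt_dotProduct, dotProduct_mulVec,
    ← mulVec_transpose, mulVec_mulVec, hA, one_mulVec]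

theorem euclNorm_diagonal_mulVec_le {d : Fin n → ℝ} {C : ℝ} (hC : 0 ≤ C) (hd : ∀ i, |d i| ≤ C)
    (x : Fin n → ℝ) : euclNorm (diagonal d *ᵥ x) ≤ C * euclNorm x := by
  rw [euclNorm, euclNorm, ← Real.sqrt_sq hC, ← Real.sqrt_mul (sq_nonneg C), Finset.mul_sum]
  gcongr with i
  rw [mulVec_diagonal, mul_pow, ← sq_abs (d i)]
  gcongr
  exact hd i

theorem euclNorm_conj_diagonal_mulVec_le {U : Matrix (Fin n) (Fin n) ℝ} (hU : Uᵀ * U = 1)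
    {d : Fin n → ℝ} {C : ℝ} (hC : 0 ≤ C) (hd : ∀ i, |d i| ≤ C) (x : Fin n → ℝ) :
    euclNorm ((U * diagonal d * Uᵀ) *ᵥ x) ≤ C * euclNorm x := by
  have hUt : Uᵀᵀ * Uᵀ = 1 := by rw [transpose_transpose]; exact mul_eq_one_comm.mp hU
  rw [← mulVec_mulVec, ← mulVec_mulVec, euclNorm_mulVec_of_transpose_mul_self hU,
    ← euclNorm_mulVec_of_transpose_mul_self hUt x]
  exact euclNorm_diagonal_mulVec_le hC hd _

end EuclNorm

theorem Real.le_mul_sInf_of_forall_le {S : Set ℝ} (hS : S.Nonempty) {c x : ℝ} (hc : 0 ≤ c)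
    (h : ∀ e ∈ S, x ≤ c * e) : x ≤ c * sInf S := by
  rw [← smul_eq_mul, ← Real.sInf_smul_of_nonneg hc]
  exact le_csInf hS.smul_set (by rintro _ ⟨e, he, rfl⟩; exact h e he)

namespace Matrix

variable {m n R : Type*} [Fintype m] [Fintype n] [DecidableEq n]

def unitOfTransposeMulSelf [CommRing R] (U : Matrix n n R) (hU : Uᵀ * U = 1) :
    (Matrix n n R)ˣ :=
  ⟨U, Uᵀ, mul_eq_one_comm.mp hU, hU⟩

theorem spectrum_conj_diagonal [Field R] {U : Matrix n n R} (hU : Uᵀ * U = 1) (d : n → R) :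
    spectrum R (U * diagonal d * Uᵀ) = Set.range d :=
  (spectrum.units_conjugate (u := unitOfTransposeMulSelf U hU)).trans (spectrum_diagonal d)

theorem aeval_conj_diagonal [CommRing R] {U : Matrix n n R} (hU : Uᵀ * U = 1) (d : n → R)
    (p : R[X]) : aeval (U * diagonal d * Uᵀ) p = U * diagonal (fun i => p.eval (d i)) * Uᵀ := by
  let φ := (MulSemiringAction.toAlgEquiv R (Matrix n n R)
    (ConjAct.toConjAct (unitOfTransposeMulSelf U hU))).toAlgHom.comp (diagonalAlgHom R)
  simpa [φ, ConjAct.units_smul_def, unitOfTransposeMulSelf, aeval_pi_apply] using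
    aeval_algHom_apply φ d p

theorem mulVec_transpose_mul_mulVec_of_mem_span [CommRing R] {V : Matrix m n R}
    (hV : Vᵀ * V = 1) {v : m → R} (hv : v ∈ Submodule.span R (Set.range V.col)) :
    V *ᵥ (Vᵀ *ᵥ v) = v := by
  obtain ⟨w, rfl⟩ : ∃ w, V *ᵥ w = v := by rwa [← range_mulVecLin] at hv
  rw [mulVec_mulVec w Vᵀ V, hV, one_mulVec]

variable [DecidableEq m]

theorem pow_mulVec_eq_of_mem_span [CommRing R] {V : Matrix m n R} (hV : Vᵀ * V = 1)
    (L : Matrix m m R) (x : n → R) (k : ℕ)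
    (hK : ∀ j ≤ k, L ^ j *ᵥ (V *ᵥ x) ∈ Submodule.span R (Set.range V.col)) :
    L ^ k *ᵥ (V *ᵥ x) = V *ᵥ ((Vᵀ * L * V) ^ k *ᵥ x) := by
  induction k with
  | zero => simp
  | succ k ih =>
    rw [pow_succ', ← mulVec_mulVec, ih fun j hj => hK j (by omega)]
    set y := (Vᵀ * L * V) ^ k *ᵥ x
    have hmem : L *ᵥ (V *ᵥ y) ∈ Submodule.span R (Set.range V.col) := by
      rw [← ih fun j hj => hK j (by omega), mulVec_mulVec, ← pow_succ']
      exact hK (k + 1) le_rfl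
    rw [← mulVec_transpose_mul_mulVec_of_mem_span hV hmem, pow_succ']
    simp only [← mulVec_mulVec, y]

theorem aeval_mulVec_eq_of_mem_span [CommRing R] {V : Matrix m n R} (hV : Vᵀ * V = 1)
    (L : Matrix m m R) (x : n → R) {K : ℕ}
    (hK : ∀ j < K, L ^ j *ᵥ (V *ᵥ x) ∈ Submodule.span R (Set.range V.col))
    {p : R[X]} (hp : p.natDegree < K) :
    aeval L p *ᵥ (V *ᵥ x) = V *ᵥ (aeval (Vᵀ * L * V) p *ᵥ x) := by
  simp only [aeval_eq_sum_range' hp, sum_mulVec, mulVec_sum, smul_mulVec, mulVec_smul]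
  refine Finset.sum_congr rfl fun k hk => ?_
  rw [pow_mulVec_eq_of_mem_span hV L x k fun j hj => hK j (by simp at hk; omega)]

end Matrix

theorem euclNorm_conj_diagonal_sub_le {N M : ℕ} {U : Matrix (Fin N) (Fin N) ℝ}
    {W : Matrix (Fin M) (Fin M) ℝ} {V : Matrix (Fin N) (Fin M) ℝ}
    (hU : Uᵀ * U = 1) (hW : Wᵀ * W = 1) (hV : Vᵀ * V = 1)
    {a b : Fin N → ℝ} {c d : Fin M → ℝ} {s : Fin N → ℝ} {x : Fin M → ℝ}
    (hexact : (U * diagonal b * Uᵀ) *ᵥ s = V *ᵥ ((W * diagonal d * Wᵀ) *ᵥ x))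
    {C : ℝ} (hC : 0 ≤ C) (hab : ∀ i, |a i - b i| ≤ C) (hcd : ∀ j, |c j - d j| ≤ C) :
    euclNorm ((U * diagonal a * Uᵀ) *ᵥ s - V *ᵥ ((W * diagonal c * Wᵀ) *ᵥ x))
      ≤ C * (euclNorm s + euclNorm x) := by
  have hsplit : (U * diagonal a * Uᵀ) *ᵥ s - V *ᵥ ((W * diagonal c * Wᵀ) *ᵥ x)
      = (U * diagonal (fun i => a i - b i) * Uᵀ) *ᵥ s
        - V *ᵥ ((W * diagonal (fun j => c j - d j) * Wᵀ) *ᵥ x) := by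
    rw [← diagonal_sub, ← diagonal_sub]
    simp only [mul_sub, sub_mul, sub_mulVec, mulVec_sub, hexact]
    abel
  calc _ ≤ euclNorm ((U * diagonal (fun i => a i - b i) * Uᵀ) *ᵥ s)
        + euclNorm (V *ᵥ ((W * diagonal (fun j => c j - d j) * Wᵀ) *ᵥ x)) :=
          hsplit ▸ euclNorm_sub_le _ _
    _ ≤ C * euclNorm s + C * euclNorm x := by
      rw [euclNorm_mulVec_of_transpose_mul_self hV]
      exact add_le_add (euclNorm_conj_diagonal_mulVec_le hU hC hab s)
        (euclNorm_conj_diagonal_mulVec_le hW hC hcd x)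
    _ = C * (euclNorm s + euclNorm x) := (mul_add _ _ _).symm

theorem lanczos_error_bound_spectra_general
    (N M : ℕ) (hM : 0 < M)
    (L : Matrix (Fin N) (Fin N) ℝ)
    -- a spectral decomposition of L
    (U : Matrix (Fin N) (Fin N) ℝ) (Λ : Fin N → ℝ)
    (hU : Uᵀ * U = 1) (hLdec : L = U * Matrix.diagonal Λ * Uᵀ)
    -- a nonzero vector s
    (s : Fin N → ℝ)
    -- a function g (defined on the union of the spectra of L and H_M)
    (g : ℝ → ℝ)
    -- V_M has orthonormal columns spanning the Krylov subspace K_M(L, s),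
    -- and its first column is s / ‖s‖₂
    (V : Matrix (Fin N) (Fin M) ℝ)
    (hV : Vᵀ * V = 1)
    (hspan : Submodule.span ℝ (Set.range fun j : Fin M => Vᵀ j)
      = Submodule.span ℝ (Set.range fun k : Fin M => (L ^ (k : ℕ)) *ᵥ s))
    (hfirst : ∀ i, V i ⟨0, hM⟩ = s i / euclNorm s)
    -- a spectral decomposition of H_M = V_Mᵀ L V_M
    (W : Matrix (Fin M) (Fin M) ℝ) (μ : Fin M → ℝ)
    (hW : Wᵀ * W = 1) (hHdec : Vᵀ * L * V = W * Matrix.diagonal μ * Wᵀ) :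
    euclNorm ((U * Matrix.diagonal (fun i => g (Λ i)) * Uᵀ) *ᵥ s
        - euclNorm s • (V *ᵥ ((W * Matrix.diagonal (fun i => g (μ i)) * Wᵀ)
            *ᵥ fun j : Fin M => if j = ⟨0, hM⟩ then (1 : ℝ) else 0)))
      ≤ 2 * euclNorm s *
        sInf { e : ℝ | ∃ p : Polynomial ℝ, p.natDegree ≤ M - 1 ∧
          e = sSup ((fun z => |g z - p.eval z|) ''
                (spectrum ℝ L ∪ spectrum ℝ (Vᵀ * L * V))) } := by
  set x : Fin M → ℝ := Pi.single ⟨0, hM⟩ (euclNorm s)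
  have hx : euclNorm s • (fun j : Fin M => if j = ⟨0, hM⟩ then (1 : ℝ) else 0) = x := by
    ext j
    simp [x, Pi.single_apply]
  have hVx : V *ᵥ x = s := by
    ext i
    simp only [x, mulVec_single, Pi.smul_apply, col_apply, op_smul_eq_mul, hfirst]
    exact div_mul_cancel_of_imp fun h => by rw [euclNorm_eq_zero.mp h, Pi.zero_apply]
  have hK : ∀ j < M, L ^ j *ᵥ (V *ᵥ x) ∈ Submodule.span ℝ (Set.range V.col) := fun j hj => by
    rw [hVx]
    exact hspan ▸ Submodule.subset_span ⟨⟨j, hj⟩, rfl⟩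
  rw [← mulVec_smul, ← mulVec_smul, hx]
  refine Real.le_mul_sInf_of_forall_le ?_ (mul_nonneg zero_le_two (euclNorm_nonneg s)) ?_
  · exact ⟨_, 0, by simp, rfl⟩
  rintro _ ⟨p, hp, rfl⟩
  set C := sSup ((fun z => |g z - p.eval z|) '' (spectrum ℝ L ∪ spectrum ℝ (Vᵀ * L * V)))
  have hC : 0 ≤ C := Real.sSup_nonneg (by rintro _ ⟨z, -, rfl⟩; exact abs_nonneg _)
  have hle : ∀ z ∈ spectrum ℝ L ∪ spectrum ℝ (Vᵀ * L * V), |g z - p.eval z| ≤ C :=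
    fun z hz => le_csSup ((((finite_spectrum L).union (finite_spectrum _)).image _).bddAbove)
      ⟨z, hz, rfl⟩
  have hexact := aeval_mulVec_eq_of_mem_span hV L x hK (p := p) (by omega)
  rw [hVx, hHdec, aeval_conj_diagonal hW, hLdec, aeval_conj_diagonal hU] at hexact
  calc _ ≤ C * (euclNorm s + euclNorm x) :=
        euclNorm_conj_diagonal_sub_le hU hW hV hexact hC
          (fun i => hle _ (.inl (hLdec ▸ spectrum_conj_diagonal hU Λ ▸ ⟨i, rfl⟩)))
          (fun j => hle _ (.inr (hHdec ▸ spectrum_conj_diagonal hW μ ▸ ⟨j, rfl⟩)))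
    _ = 2 * euclNorm s * C := by
      rw [euclNorm_single, abs_of_nonneg (euclNorm_nonneg s)]
      ring

/-- The Lanczos approximation error bound with the maximum taken over the union
of the spectra of `L` and `H_M`:
`‖g(L)s − ‖s‖₂ V_M g(H_M) e₁‖₂ ≤ 2‖s‖₂ · min_{p ∈ P_{M−1}} max_{z ∈ spec(L) ∪ spec(H_M)} |g(z) − p(z)|`. -/
theorem lanczos_error_bound_spectra
    (N M : ℕ) (hM : 0 < M)
    (L : Matrix (Fin N) (Fin N) ℝ) (hL : L.IsSymm)
    -- a spectral decomposition of L
    (U : Matrix (Fin N) (Fin N) ℝ) (Λ : Fin N → ℝ)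
    (hU : Uᵀ * U = 1) (hLdec : L = U * Matrix.diagonal Λ * Uᵀ)
    -- a nonzero vector s
    (s : Fin N → ℝ) (hs : s ≠ 0)
    -- a function g (defined on the union of the spectra of L and H_M)
    (g : ℝ → ℝ)
    -- V_M has orthonormal columns spanning the Krylov subspace K_M(L, s),
    -- and its first column is s / ‖s‖₂
    (V : Matrix (Fin N) (Fin M) ℝ)
    (hV : Vᵀ * V = 1)
    (hspan : Submodule.span ℝ (Set.range fun j : Fin M => Vᵀ j)
      = Submodule.span ℝ (Set.range fun k : Fin M => (L ^ (k : ℕ)) *ᵥ s))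
    (hfirst : ∀ i, V i ⟨0, hM⟩ = s i / euclNorm s)
    -- a spectral decomposition of H_M = V_Mᵀ L V_M
    (W : Matrix (Fin M) (Fin M) ℝ) (μ : Fin M → ℝ)
    (hW : Wᵀ * W = 1) (hHdec : Vᵀ * L * V = W * Matrix.diagonal μ * Wᵀ) :
    euclNorm ((U * Matrix.diagonal (fun i => g (Λ i)) * Uᵀ) *ᵥ s
        - euclNorm s • (V *ᵥ ((W * Matrix.diagonal (fun i => g (μ i)) * Wᵀ)
            *ᵥ fun j : Fin M => if j = ⟨0, hM⟩ then (1 : ℝ) else 0)))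
      ≤ 2 * euclNorm s *
        sInf { e : ℝ | ∃ p : Polynomial ℝ, p.natDegree ≤ M - 1 ∧
          e = sSup ((fun z => |g z - p.eval z|) ''
                (spectrum ℝ L ∪ spectrum ℝ (Vᵀ * L * V))) } :=
  lanczos_error_bound_spectra_general N M hM L U Λ hU hLdec s g V hV hspan hfirst W μ hW hHdec
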